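/- arXiv:1010.1416 — 4 statements merged into one kernel-verified Lean document; each statement's English description precedes it below -/
import Mathlib

section
/- In KSPM(p) with p ≥ 2, starting from a stable monotone configuration x ∈ SM(n) to which one grain has been added at column 1, in any sequence of legal topplings (an avalanche) each site topples at most once. -/
/-- One-dimensional KSPM(p) toppling at site `i`: site `i` loses `p-1` grains and
each site `j` with `i+1 ≤ j ≤ i+p-1` receives one grain. -/
def topple (p : ℕ) (i : ℤ) (x : ℤ → ℕ) : ℤ → ℕ :=
  fun j => if j = i then x i - (p - 1)
    else if i + 1 ≤ j ∧ j ≤ i + (p : ℤ) - 1 then x j + 1 else x j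

namespace KSPMaux

def fired (s : ℕ → ℤ) (t : ℕ) (j : ℤ) : ℕ :=
  ((Finset.range t).filter (fun u => s u = j)).card

def recv (p : ℕ) (s : ℕ → ℤ) (t : ℕ) (j : ℤ) : ℕ :=
  ((Finset.range t).filter (fun u => j - (p : ℤ) + 1 ≤ s u ∧ s u ≤ j - 1)).card

lemma fired_succ (s : ℕ → ℤ) (t : ℕ) (j : ℤ) :
    fired s (t + 1) j = fired s t j + (if s t = j then 1 else 0) := by
  unfold fired
  rw [Finset.range_add_one, Finset.filter_insert]
  split_ifs with h
  · rw [Finset.card_insert_of_notMem (by simp)]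
  · simp

lemma recv_succ (p : ℕ) (s : ℕ → ℤ) (t : ℕ) (j : ℤ) :
    recv p s (t + 1) j = recv p s t j +
      (if j - (p : ℤ) + 1 ≤ s t ∧ s t ≤ j - 1 then 1 else 0) := by
  unfold recv
  rw [Finset.range_add_one, Finset.filter_insert]
  split_ifs with h
  · rw [Finset.card_insert_of_notMem (by simp)]
  · simp

lemma fired_le_one (s : ℕ → ℤ) (t : ℕ) (j : ℤ)
    (hd : ∀ a b : ℕ, a < t → b < t → s a = s b → a = b) : fired s t j ≤ 1 := by
  unfold fired
  rw [Finset.card_le_one]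
  intro a ha b hb
  simp only [Finset.mem_filter, Finset.mem_range] at ha hb
  exact hd a b ha.1 hb.1 (ha.2.trans hb.2.symm)

lemma fired_pos (s : ℕ → ℤ) (t : ℕ) (j : ℤ) (v : ℕ) (hv : v < t) (hsv : s v = j) :
    1 ≤ fired s t j := by
  unfold fired
  rw [Nat.one_le_iff_ne_zero, ← Nat.pos_iff_ne_zero, Finset.card_pos]
  exact ⟨v, by simp [Finset.mem_filter, hv, hsv]⟩

lemma fired_eq_zero (s : ℕ → ℤ) (t : ℕ) (j : ℤ) (h : ∀ v : ℕ, v < t → s v ≠ j) :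
    fired s t j = 0 := by
  unfold fired
  rw [Finset.card_eq_zero, Finset.filter_eq_empty_iff]
  intro v hv
  exact h v (Finset.mem_range.mp hv)

lemma recv_eq_zero (p : ℕ) (s : ℕ → ℤ) (t : ℕ) (j : ℤ)
    (h : ∀ v : ℕ, v < t → ¬(j - (p : ℤ) + 1 ≤ s v ∧ s v ≤ j - 1)) :
    recv p s t j = 0 := by
  unfold recv
  rw [Finset.card_eq_zero, Finset.filter_eq_empty_iff]
  intro v hv
  exact h v (Finset.mem_range.mp hv)

lemma recv_sub (p : ℕ) (hp : 2 ≤ p) (s : ℕ → ℤ) (t : ℕ) (j : ℤ) :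
    (recv p s t (j + 1) : ℤ) - recv p s t j
      = (fired s t j : ℤ) - fired s t (j - (p : ℤ) + 1) := by
  have hp' : (2 : ℤ) ≤ (p : ℤ) := by exact_mod_cast hp
  induction t with
  | zero => simp [recv, fired]
  | succ t ih =>
    rw [fired_succ, fired_succ, recv_succ, recv_succ]
    push_cast
    split_ifs <;> omega

lemma conf_formula (p m : ℕ) (hp : 2 ≤ p) (s : ℕ → ℤ) (c : ℕ → ℤ → ℕ)
    (hlegal : ∀ t : ℕ, t < m → c t (s t + 1) + p ≤ c t (s t))
    (hstep : ∀ t : ℕ, t < m → c (t + 1) = topple p (s t) (c t)) :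
    ∀ t : ℕ, t ≤ m → ∀ j : ℤ,
      (c t j : ℤ) = (c 0 j : ℤ) - ((p : ℤ) - 1) * fired s t j + recv p s t j := by
  have hp' : (2 : ℤ) ≤ (p : ℤ) := by exact_mod_cast hp
  intro t
  induction t with
  | zero => intro _ j; simp [fired, recv]
  | succ t ih =>
    intro htm j
    have ht : t < m := htm
    have ihj := ih (le_of_lt ht)
    rw [hstep t ht]
    simp only [topple]
    rw [fired_succ, recv_succ]
    by_cases h1 : j = s t
    · subst h1
      have hleg := hlegal t ht
      have hcp : p - 1 ≤ c t (s t) := by omega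
      rw [if_pos rfl, if_pos rfl]
      have hrz : ¬(s t - (p : ℤ) + 1 ≤ s t ∧ s t ≤ s t - 1) := by
        intro h; omega
      rw [if_neg hrz, Nat.cast_sub hcp]
      have h1p : (1:ℕ) ≤ p := by omega
      rw [Nat.cast_sub h1p]
      push_cast
      linear_combination ihj (s t)
    · rw [if_neg h1, if_neg (fun (h : s t = j) => h1 h.symm)]
      by_cases h2 : s t + 1 ≤ j ∧ j ≤ s t + (p : ℤ) - 1
      · rw [if_pos h2]
        have hr : j - (p : ℤ) + 1 ≤ s t ∧ s t ≤ j - 1 := by omega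
        rw [if_pos hr]
        push_cast
        linear_combination ihj j
      · rw [if_neg h2]
        have hr : ¬(j - (p : ℤ) + 1 ≤ s t ∧ s t ≤ j - 1) := by
          intro h; exact h2 (by omega)
        rw [if_neg hr]
        push_cast
        linear_combination ihj j

end KSPMaux

/-- In KSPM(p) with p ≥ 2, starting from a stable monotone configuration
`x ∈ SM(n)` to which one grain has been added at column 1, in any sequence of
legal topplings each site topples at most once. -/
theorem kspm_avalanche_topples_at_most_once (p n : ℕ) (hp : 2 ≤ p) (hn : 1 ≤ n)
    (x : ℤ → ℕ)
    (hmono : ∀ i : ℤ, x (i + 1) ≤ x i)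
    (hstab : ∀ i : ℤ, x i < x (i + 1) + p)
    (hleft : ∀ i : ℤ, i ≤ 1 → x i = x 1)
    (hright : ∀ i : ℤ, (n : ℤ) < i → x i = 0)
    (m : ℕ) (s : ℕ → ℤ) (c : ℕ → ℤ → ℕ)
    (hc0 : c 0 = fun j => if j = 1 then x 1 + 1 else x j)
    (hlegal : ∀ t : ℕ, t < m → c t (s t + 1) + p ≤ c t (s t))
    (hstep : ∀ t : ℕ, t < m → c (t + 1) = topple p (s t) (c t)) :
    ∀ t u : ℕ, t < m → u < m → s t = s u → t = u := by
  have hp' : (2 : ℤ) ≤ (p : ℤ) := by exact_mod_cast hp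
  have hform := KSPMaux.conf_formula p m hp s c hlegal hstep
  suffices key : ∀ b : ℕ, b < m → ∀ a : ℕ, a < b → s a ≠ s b by
    intro t u ht hu hsu
    rcases lt_trichotomy t u with h | h | h
    · exact absurd hsu (key u hu t h)
    · exact h
    · exact absurd hsu.symm (key t ht u h)
  intro b
  induction b using Nat.strong_induction_on with
  | _ b IH =>
  intro hb a hab hsab
  -- all firing sites among the first `b` steps are pairwise distinct
  have hd : ∀ a1 a2 : ℕ, a1 < b → a2 < b → s a1 = s a2 → a1 = a2 := by
    intro a1 a2 h1 h2 he
    rcases lt_trichotomy a1 a2 with h | h | h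
    · exact absurd he (IH a2 h2 (lt_trans h2 hb) a1 h)
    · exact h
    · exact absurd he.symm (IH a1 h1 (lt_trans h1 hb) a2 h)
  -- no site ≤ 0 fires among the first `b` steps
  have hpos : ∀ v : ℕ, v < b → 1 ≤ s v := by
    intro v
    induction v using Nat.strong_induction_on with
    | _ v IHv =>
    intro hvb
    by_contra hneg
    push_neg at hneg
    have hvm : v < m := lt_trans hvb hb
    have hleg := hlegal v hvm
    have hf0 : KSPMaux.fired s v (s v) = 0 := by
      apply KSPMaux.fired_eq_zero
      intro u hu hq
      have := IHv u hu (lt_trans hu hvb)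
      omega
    have hr0 : KSPMaux.recv p s v (s v) = 0 := by
      apply KSPMaux.recv_eq_zero
      intro u hu hq
      have := IHv u hu (lt_trans hu hvb)
      omega
    have e1 := hform v (le_of_lt hvm) (s v)
    have e2 := hform v (le_of_lt hvm) (s v + 1)
    have hc0v : c 0 (s v) = x 1 := by
      rw [hc0]
      simp only
      rw [if_neg (by omega)]
      exact hleft _ (by omega)
    have hc0v1 : (x 1 : ℤ) ≤ (c 0 (s v + 1) : ℤ) := by
      rw [hc0]
      simp only
      split_ifs with h
      · push_cast; omega
      · rw [hleft (s v + 1) (by omega)]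
    have hfb : KSPMaux.fired s v (s v + 1) ≤ 1 := by
      apply KSPMaux.fired_le_one
      intro a1 a2 h1 h2 he
      exact hd a1 a2 (lt_trans h1 hvb) (lt_trans h2 hvb) he
    have hrnn : (0 : ℤ) ≤ (KSPMaux.recv p s v (s v + 1) : ℤ) := Nat.cast_nonneg _
    have hlegZ : (c v (s v + 1) : ℤ) + p ≤ (c v (s v) : ℤ) := by exact_mod_cast hleg
    have hfbZ : (KSPMaux.fired s v (s v + 1) : ℤ) ≤ 1 := by exact_mod_cast hfb
    have hfm : ((p : ℤ) - 1) * (KSPMaux.fired s v (s v + 1) : ℤ) ≤ ((p : ℤ) - 1) * 1 :=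
      mul_le_mul_of_nonneg_left hfbZ (by linarith)
    rw [e1, e2] at hlegZ
    rw [hc0v] at hlegZ
    push_cast [hf0, hr0] at hlegZ
    linarith
  -- the repeated firing at time `b`
  have hbm := hb
  have hia : 1 ≤ s b := hsab ▸ hpos a hab
  have hf1 : KSPMaux.fired s b (s b) = 1 :=
    le_antisymm (KSPMaux.fired_le_one s b (s b) hd) (KSPMaux.fired_pos s b (s b) a hab hsab)
  have hf2 : KSPMaux.fired s b (s b + 1) ≤ 1 := KSPMaux.fired_le_one s b (s b + 1) hd
  have hf3le : (KSPMaux.fired s b (s b - (p : ℤ) + 1) : ℤ) ≤ 1 := by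
    exact_mod_cast KSPMaux.fired_le_one s b (s b - (p : ℤ) + 1) hd
  have hf3z : s b = 1 → KSPMaux.fired s b (s b - (p : ℤ) + 1) = 0 := by
    intro h1
    apply KSPMaux.fired_eq_zero
    intro v hv hq
    have := hpos v hv
    omega
  have hrs := KSPMaux.recv_sub p hp s b (s b)
  have e1 := hform b (le_of_lt hb) (s b)
  have e2 := hform b (le_of_lt hb) (s b + 1)
  have hlegZ : (c b (s b + 1) : ℤ) + p ≤ (c b (s b) : ℤ) := by exact_mod_cast hlegal b hb
  have hstabZ : (x (s b) : ℤ) < (x (s b + 1) : ℤ) + p := by exact_mod_cast hstab (s b)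
  have hc01 : (c 0 (s b + 1) : ℤ) = (x (s b + 1) : ℤ) := by
    rw [hc0]; simp only; rw [if_neg (by omega)]
  have hc00 : (c 0 (s b) : ℤ) ≤ (x (s b) : ℤ) + (if s b = 1 then 1 else 0) := by
    rw [hc0]; simp only
    split_ifs with h
    · rw [h]; push_cast; omega
    · omega
  have hf2Z : (KSPMaux.fired s b (s b + 1) : ℤ) ≤ 1 := by exact_mod_cast hf2
  have hf2nn : (0 : ℤ) ≤ (KSPMaux.fired s b (s b + 1) : ℤ) := Nat.cast_nonneg _
  have hfm : (0 : ℤ) ≤ ((p : ℤ) - 1) * (1 - (KSPMaux.fired s b (s b + 1) : ℤ)) :=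
    mul_nonneg (by linarith) (by linarith)
  rw [e1, e2] at hlegZ
  by_cases h1 : s b = 1
  · have := hf3z h1
    rw [this] at hrs
    rw [if_pos h1] at hc00
    push_cast [hf1] at hlegZ hrs
    linarith
  · rw [if_neg h1] at hc00
    push_cast [hf1] at hlegZ hrs
    linarith
end

section
/- In KSPM(p) with p ≥ 2, starting from a stable monotone configuration x ∈ SM(n) to which one grain has been added at column 1, every avalanche terminates after at most n topplings, and the resulting final configuration is stable and monotone on the sites i ≥ 1. -/
open Finset

def heightDiff (y : ℤ → ℕ) (i : ℤ) : ℤ := (y i : ℤ) - y (i + 1)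

lemma heightDiff_topple {p : ℕ} {k : ℤ} {y : ℤ → ℕ} (hk : p - 1 ≤ y k) (i : ℤ) :
    heightDiff (topple p k y) i = heightDiff y i + (if k = i - p + 1 then 1 else 0)
      - p * (if k = i then 1 else 0) + (p - 1) * (if k = i + 1 then 1 else 0) := by
  unfold heightDiff topple
  split_ifs <;> subst_vars <;> omega

lemma heightDiff_addGrain (x : ℤ → ℕ) (i : ℤ) :
    heightDiff (fun j => if j = 1 then x 1 + 1 else x j) i
      = heightDiff x i + (if i = 1 then 1 else 0) - (if i = 0 then 1 else 0) := by
  unfold heightDiff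
  simp only
  split_ifs <;> subst_vars <;> norm_num at * <;> omega

lemma heightDiff_eq_zero_of_notMem_Icc {n : ℕ} {x : ℤ → ℕ} (hleft : ∀ i : ℤ, i ≤ 1 → x i = x 1)
    (hright : ∀ i : ℤ, (n : ℤ) < i → x i = 0) {k : ℤ} (hk : k ∉ Icc (1 : ℤ) n) :
    heightDiff x k = 0 := by
  rw [mem_Icc, not_and_or, not_le, not_le] at hk
  unfold heightDiff
  rcases hk with hk | hk
  · rw [hleft k hk.le, hleft (k + 1) (by omega)]; simp
  · rw [hright k hk, hright (k + 1) (by omega)]; simp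

def toppleCount (s : ℕ → ℤ) (t t' : ℕ) (j : ℤ) : ℕ := #{a ∈ Ico t t' | s a = j}

section toppleCount

variable {s : ℕ → ℤ}

lemma toppleCount_self (t : ℕ) (j : ℤ) : toppleCount s t t j = 0 := by
  simp [toppleCount]

lemma toppleCount_succ {t t' : ℕ} (h : t ≤ t') (j : ℤ) :
    toppleCount s t (t' + 1) j = toppleCount s t t' j + if s t' = j then 1 else 0 := by
  unfold toppleCount
  rw [← Nat.succ_eq_add_one, Nat.Ico_succ_right_eq_insert_Ico h, filter_insert]
  split_ifs
  · rw [card_insert_of_notMem (by simp)]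
  · simp

lemma toppleCount_anti {t t' t'' : ℕ} (h : t ≤ t') (j : ℤ) :
    toppleCount s t' t'' j ≤ toppleCount s t t'' j :=
  card_le_card (filter_subset_filter _ (Ico_subset_Ico_left h))

lemma one_le_toppleCount {t t' : ℕ} (h : t < t') : 1 ≤ toppleCount s t t' (s t) :=
  card_pos.2 ⟨t, by simp [h]⟩

lemma le_of_toppleCount_le_one {m n : ℕ} (hcount : ∀ j, toppleCount s 0 m j ≤ 1)
    (hsupp : ∀ j, toppleCount s 0 m j ≠ 0 → j ∈ Icc (1 : ℤ) n) : m ≤ n := by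
  have hmaps : Set.MapsTo s (Ico 0 m : Finset ℕ) (Icc (1 : ℤ) n) := fun a ha =>
    hsupp _ (Nat.pos_iff_ne_zero.1 <| (one_le_toppleCount (mem_Ico.1 ha).2).trans
      (toppleCount_anti (Nat.zero_le a) _))
  calc m = #(Ico 0 m) := by simp
    _ = ∑ j ∈ Icc (1 : ℤ) n, toppleCount s 0 m j := card_eq_sum_card_fiberwise hmaps
    _ ≤ ∑ _j ∈ Icc (1 : ℤ) n, 1 := sum_le_sum fun j _ => hcount j
    _ = n := by simp

end toppleCount

lemma mem_Icc_and_eq_zero_of_le_heightDiff {p n : ℕ} (hp : 2 ≤ p) {d : ℤ → ℤ}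
    (hout : ∀ k, k ∉ Icc (1 : ℤ) n → d k ≤ 0) (hle : ∀ k, d k ≤ p - 1 + if k = 1 then 1 else 0)
    {F : ℤ → ℕ} (hF : ∀ j, F j ≤ 1) (hsupp : ∀ j, F j ≠ 0 → j ∈ Icc (1 : ℤ) n) {k : ℤ}
    (hk : p ≤ d k + F (k - p + 1) - p * F k + (p - 1) * F (k + 1)) :
    k ∈ Icc (1 : ℤ) n ∧ F k = 0 := by
  have hF' : ∀ j, F j = 0 ∨ F j = 1 ∧ 1 ≤ j ∧ j ≤ n := fun j => by
    have := hsupp j; rw [mem_Icc] at this; have := hF j; omega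
  have hout := hout k
  have hle := hle k
  rw [mem_Icc] at hout ⊢
  rcases hF' k with h | ⟨h, _⟩ <;> rcases hF' (k + 1) with h' | ⟨h', _⟩ <;>
    rcases hF' (k - p + 1) with h'' | ⟨h'', _⟩ <;> rw [h, h', h''] at hk <;> push_cast at hk <;>
    split_ifs at hle <;> omega

section legal

variable {p m : ℕ} {s : ℕ → ℤ} {c : ℕ → ℤ → ℕ}

lemma heightDiff_eq_add_toppleCount (hcap : ∀ t < m, p - 1 ≤ c t (s t))
    (hstep : ∀ t < m, c (t + 1) = topple p (s t) (c t)) {t t' : ℕ} (htt' : t ≤ t')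
    (ht' : t' ≤ m) (i : ℤ) :
    heightDiff (c t') i = heightDiff (c t) i + toppleCount s t t' (i - p + 1)
      - p * toppleCount s t t' i + (p - 1) * toppleCount s t t' (i + 1) := by
  induction t', htt' using Nat.le_induction with
  | base => simp [toppleCount_self]
  | succ t' htt' ih =>
    rw [hstep t' ht', heightDiff_topple (hcap t' ht'), ih (by omega), toppleCount_succ htt',
      toppleCount_succ htt', toppleCount_succ htt']
    push_cast
    ring

lemma toppleCount_le_one_and_mem_Icc {n : ℕ} (hp : 2 ≤ p)
    (hout : ∀ k, k ∉ Icc (1 : ℤ) n → heightDiff (c 0) k ≤ 0)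
    (hle : ∀ k, heightDiff (c 0) k ≤ p - 1 + if k = 1 then 1 else 0)
    (hlegal : ∀ t < m, c t (s t + 1) + p ≤ c t (s t))
    (hstep : ∀ t < m, c (t + 1) = topple p (s t) (c t)) {t : ℕ} (ht : t ≤ m) :
    (∀ j, toppleCount s 0 t j ≤ 1) ∧ ∀ j, toppleCount s 0 t j ≠ 0 → j ∈ Icc (1 : ℤ) n := by
  induction t with
  | zero => simp [toppleCount_self]
  | succ t ih =>
    obtain ⟨hcount, hsupp⟩ := ih (by omega)
    have hcap : ∀ t < m, p - 1 ≤ c t (s t) := fun t ht => by have := hlegal t ht; omega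
    have hunstable : p ≤ heightDiff (c t) (s t) := by have := hlegal t ht; unfold heightDiff; omega
    rw [heightDiff_eq_add_toppleCount hcap hstep (Nat.zero_le t) (by omega)] at hunstable
    obtain ⟨hmem, hfresh⟩ := mem_Icc_and_eq_zero_of_le_heightDiff hp hout hle hcount hsupp hunstable
    refine ⟨fun j => ?_, fun j hj => ?_⟩
    · rw [toppleCount_succ (Nat.zero_le t)]
      split_ifs with hj'
      · rw [← hj', hfresh]
      · simpa using hcount j
    · rw [toppleCount_succ (Nat.zero_le t)] at hj
      split_ifs at hj with hj'
      · exact hj' ▸ hmem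
      · exact hsupp j (by simpa using hj)

lemma heightDiff_nonneg_of_toppleCount_le_one (hp : 1 ≤ p)
    (h0 : ∀ i, 1 ≤ i → 0 ≤ heightDiff (c 0) i)
    (hlegal : ∀ t < m, c t (s t + 1) + p ≤ c t (s t))
    (hstep : ∀ t < m, c (t + 1) = topple p (s t) (c t))
    (hcount : ∀ j, toppleCount s 0 m j ≤ 1) {i : ℤ} (hi : 1 ≤ i) :
    0 ≤ heightDiff (c m) i := by
  have hcap : ∀ t < m, p - 1 ≤ c t (s t) := fun t ht => by have := hlegal t ht; omega
  have hp' : (0 : ℤ) ≤ p - 1 := by omega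
  by_cases hi0 : toppleCount s 0 m i = 0
  · rw [heightDiff_eq_add_toppleCount hcap hstep (Nat.zero_le m) le_rfl, hi0]
    have := h0 i hi
    have := mul_nonneg hp' (toppleCount s 0 m (i + 1)).cast_nonneg
    push_cast
    linarith
  obtain ⟨t, ht, rfl⟩ : ∃ t < m, s t = i := by
    obtain ⟨t, ht⟩ := card_ne_zero.1 hi0
    rw [mem_filter, mem_Ico] at ht
    exact ⟨t, ht.1.2, ht.2⟩
  have hone : toppleCount s t m (s t) = 1 :=
    ((toppleCount_anti (Nat.zero_le t) _).trans (hcount _)).antisymm (one_le_toppleCount ht)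
  have hunstable : p ≤ heightDiff (c t) (s t) := by have := hlegal t ht; unfold heightDiff; omega
  rw [heightDiff_eq_add_toppleCount hcap hstep ht.le le_rfl, hone]
  have := mul_nonneg hp' (toppleCount s t m (s t + 1)).cast_nonneg
  push_cast
  linarith [(toppleCount s t m (s t - p + 1)).cast_nonneg (α := ℤ)]

end legal

/-- In KSPM(p) with p ≥ 2, starting from a stable monotone configuration
`x ∈ SM(n)` to which one grain has been added at column 1, every avalanche
terminates after at most `n` topplings (any sequence of legal topplings has
length at most `n`), and when the sequence is maximal (no further toppling is
applicable) the final configuration is stable and monotone on the sites `i ≥ 1`. -/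
theorem kspm_avalanche_terminates_and_final_stable (p n : ℕ) (hp : 2 ≤ p) (hn : 1 ≤ n)
    (x : ℤ → ℕ)
    (hmono : ∀ i : ℤ, x (i + 1) ≤ x i)
    (hstab : ∀ i : ℤ, x i < x (i + 1) + p)
    (hleft : ∀ i : ℤ, i ≤ 1 → x i = x 1)
    (hright : ∀ i : ℤ, (n : ℤ) < i → x i = 0)
    (m : ℕ) (s : ℕ → ℤ) (c : ℕ → ℤ → ℕ)
    (hc0 : c 0 = fun j => if j = 1 then x 1 + 1 else x j)
    (hlegal : ∀ t : ℕ, t < m → c t (s t + 1) + p ≤ c t (s t))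
    (hstep : ∀ t : ℕ, t < m → c (t + 1) = topple p (s t) (c t)) :
    m ≤ n ∧
      ((∀ i : ℤ, ¬ (c m (i + 1) + p ≤ c m i)) →
        ∀ i : ℤ, 1 ≤ i → c m (i + 1) ≤ c m i ∧ c m i < c m (i + 1) + p) := by
  have hdiff0 (i : ℤ) := hc0 ▸ heightDiff_addGrain x i
  have hout (k : ℤ) (hk : k ∉ Icc (1 : ℤ) n) : heightDiff (c 0) k ≤ 0 := by
    have := heightDiff_eq_zero_of_notMem_Icc hleft hright hk
    rw [mem_Icc] at hk
    rw [hdiff0]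
    split_ifs <;> omega
  have hle (k : ℤ) : heightDiff (c 0) k ≤ p - 1 + if k = 1 then 1 else 0 := by
    have := hstab k
    rw [hdiff0]
    unfold heightDiff
    split_ifs <;> omega
  have hnonneg (i : ℤ) (hi : 1 ≤ i) : 0 ≤ heightDiff (c 0) i := by
    have := hmono i
    rw [hdiff0]
    unfold heightDiff
    split_ifs <;> omega
  obtain ⟨hcount, hsupp⟩ := toppleCount_le_one_and_mem_Icc hp hout hle hlegal hstep le_rfl
  refine ⟨le_of_toppleCount_le_one hcount hsupp, fun hmax i hi => ⟨?_, by have := hmax i; omega⟩⟩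
  have := heightDiff_nonneg_of_toppleCount_le_one (by omega) hnonneg hlegal hstep hcount hi
  unfold heightDiff at this
  omega
end

section
/- In the two-dimensional Kadanoff sandpile model with parameter p = 3, the toppling rule can be blocked in both directions: there exists a finite monotone configuration x : ℕ × ℕ → ℕ and a site (i, j) with x_{i,j} − x_{i+1,j} ≥ 3 (respectively x_{i,j} − x_{i,j+1} ≥ 3) such that neither the horizontal application of the Kadanoff rule at (i, j) (replacing x_{i,j} by x_{i,j} − 2 and adding one grain to each of x_{i+1,j} and x_{i+2,j}) nor the vertical application (replacing x_{i,j} by x_{i,j} − 2 and adding one grain to each of x_{i,j+1} and x_{i,j+2}) yields a monotone configuration. -/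
/-- Horizontal application of the two-dimensional Kadanoff rule with parameter
`p` at site `(i, j)`: site `(i, j)` loses `p − 1` grains and each of the sites
`(i+1, j), …, (i+p−1, j)` receives one grain. -/
def hTopple (p : ℕ) (i j : ℕ) (x : ℕ × ℕ → ℕ) : ℕ × ℕ → ℕ :=
  fun s => if s = (i, j) then x (i, j) - (p - 1)
    else if s.2 = j ∧ i + 1 ≤ s.1 ∧ s.1 ≤ i + p - 1 then x s + 1 else x s

/-- Vertical application of the two-dimensional Kadanoff rule with parameter
`p` at site `(i, j)`: site `(i, j)` loses `p − 1` grains and each of the sites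
`(i, j+1), …, (i, j+p−1)` receives one grain. -/
def vTopple (p : ℕ) (i j : ℕ) (x : ℕ × ℕ → ℕ) : ℕ × ℕ → ℕ :=
  fun s => if s = (i, j) then x (i, j) - (p - 1)
    else if s.1 = i ∧ j + 1 ≤ s.2 ∧ s.2 ≤ j + p - 1 then x s + 1 else x s

/-- A two-dimensional configuration is monotone if
`x (i, j) ≥ max (x (i+1, j)) (x (i, j+1))` for all `(i, j)`. -/
def Monotone2 (x : ℕ × ℕ → ℕ) : Prop :=
  ∀ i j : ℕ, x (i + 1, j) ≤ x (i, j) ∧ x (i, j + 1) ≤ x (i, j)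

/-- In the two-dimensional Kadanoff model with `p = 3`, the toppling rule can be
blocked in both directions: there is a finite monotone configuration and a site
where the toppling condition holds (horizontally, resp. vertically) but neither
the horizontal nor the vertical application of the rule yields a monotone
configuration. -/
theorem kspm2d_blocked_both_directions :
    ∃ x : ℕ × ℕ → ℕ, (Function.support x).Finite ∧ Monotone2 x ∧
      ∃ i j : ℕ,
        (x (i + 1, j) + 3 ≤ x (i, j) ∨ x (i, j + 1) + 3 ≤ x (i, j)) ∧
        ¬ Monotone2 (hTopple 3 i j x) ∧ ¬ Monotone2 (vTopple 3 i j x) := by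
  refine ⟨fun s => if s.1 ≤ 1 ∧ s.2 ≤ 1 then 3 else 0, ?_, ?_, 1, 1, ?_, ?_, ?_⟩
  · apply (Set.finite_Iic ((1, 1) : ℕ × ℕ)).subset
    intro s hs
    simp only [Function.mem_support, ne_eq, ite_eq_right_iff, not_forall] at hs
    exact Prod.le_def.mpr ⟨hs.1.1, hs.1.2⟩
  · intro i j
    constructor <;> · dsimp only; split_ifs <;> omega
  · left; norm_num
  · intro h
    have := (h 2 0).2
    simp [hTopple] at this
  · intro h
    have := (h 0 2).1
    simp [vTopple] at this
end

section
/- In the two-dimensional Kadanoff sandpile model with parameter p ≥ 2, let x be a finite stable monotone configuration whose non-zero height differences are all at indices at most n along both axes, and let Q be the sum of all its (horizontal and vertical) height differences. Then, after one grain is added at the origin, any site (k, ℓ) whose number of grains increases during any avalanche satisfies ‖(k, ℓ)‖ ≤ n + Q, where ‖·‖ is the Euclidean norm on ℝ². -/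
/-- Telescoping sum for an antitone `ℕ`-valued sequence. -/
lemma kspm_tele (f : ℕ → ℕ) (hf : ∀ i, f (i + 1) ≤ f i) (k : ℕ) :
    (∑ i ∈ Finset.range k, (f i - f (i + 1))) + f k = f 0 := by
  induction k with
  | zero => simp
  | succ k ih => rw [Finset.sum_range_succ]; have := hf k; omega

lemma kspm_mono_left {c : ℕ × ℕ → ℕ} (h : Monotone2 c) (a j : ℕ) :
    ∀ d, c (a + d, j) ≤ c (a, j) := by
  intro d
  induction d with
  | zero => exact le_refl _
  | succ d ih => exact le_trans ((h (a + d) j).1) ih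

lemma kspm_mono_right {c : ℕ × ℕ → ℕ} (h : Monotone2 c) (i b : ℕ) :
    ∀ d, c (i, b + d) ≤ c (i, b) := by
  intro d
  induction d with
  | zero => exact le_refl _
  | succ d ih => exact le_trans ((h i (b + d)).2) ih

/-- Row-0 mass does not increase under a horizontal toppling. -/
lemma kspm_row_hTopple (p : ℕ) (hp : 2 ≤ p) (i j : ℕ) (c : ℕ × ℕ → ℕ)
    (hd : c (i + 1, j) + p ≤ c (i, j)) (N : ℕ) :
    ∑ a ∈ Finset.range N, hTopple p i j c (a, 0) ≤ ∑ a ∈ Finset.range N, c (a, 0) := by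
  by_cases hj : j = 0
  · subst hj
    by_cases hiN : i < N
    · have hmem : i ∈ Finset.range N := Finset.mem_range.mpr hiN
      have hsplit1 : (∑ a ∈ (Finset.range N).erase i, hTopple p i 0 c (a, 0))
          + hTopple p i 0 c (i, 0) = ∑ a ∈ Finset.range N, hTopple p i 0 c (a, 0) :=
        Finset.sum_erase_add (Finset.range N) (fun a => hTopple p i 0 c (a, 0)) hmem
      have hsplit2 : (∑ a ∈ (Finset.range N).erase i, c (a, 0))
          + c (i, 0) = ∑ a ∈ Finset.range N, c (a, 0) :=
        Finset.sum_erase_add (Finset.range N) (fun a => c (a, 0)) hmem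
      have hterm : ∀ a ∈ (Finset.range N).erase i,
          hTopple p i 0 c (a, 0) = c (a, 0) + (if i + 1 ≤ a ∧ a ≤ i + p - 1 then 1 else 0) := by
        intro a ha
        have hai : a ≠ i := Finset.ne_of_mem_erase ha
        simp only [hTopple, Prod.mk.injEq, hai, false_and, if_false, true_and]
        split_ifs <;> omega
      have herase : ∑ a ∈ (Finset.range N).erase i, hTopple p i 0 c (a, 0)
          = (∑ a ∈ (Finset.range N).erase i, c (a, 0))
            + ∑ a ∈ (Finset.range N).erase i, (if i + 1 ≤ a ∧ a ≤ i + p - 1 then 1 else 0) := by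
        rw [Finset.sum_congr rfl hterm, Finset.sum_add_distrib]
      have hcnt : (∑ a ∈ (Finset.range N).erase i,
          (if i + 1 ≤ a ∧ a ≤ i + p - 1 then 1 else 0)) ≤ p - 1 := by
        calc (∑ a ∈ (Finset.range N).erase i, (if i + 1 ≤ a ∧ a ≤ i + p - 1 then (1:ℕ) else 0))
            = (((Finset.range N).erase i).filter (fun a => i + 1 ≤ a ∧ a ≤ i + p - 1)).card := by
              simp [Finset.sum_boole]
          _ ≤ (Finset.Icc (i + 1) (i + p - 1)).card := by
              apply Finset.card_le_card
              intro a ha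
              simp only [Finset.mem_filter] at ha
              exact Finset.mem_Icc.mpr ha.2
          _ = p - 1 := by rw [Nat.card_Icc]; omega
      have htop : hTopple p i 0 c (i, 0) = c (i, 0) - (p - 1) := by
        simp [hTopple]
      omega
    · apply le_of_eq
      apply Finset.sum_congr rfl
      intro a ha
      have haN : a < N := Finset.mem_range.mp ha
      have h1 : ((a, 0) : ℕ × ℕ) ≠ (i, 0) := by
        intro hco; injection hco with hc1 hc2; omega
      simp only [hTopple, h1, if_false]
      split_ifs with h2
      · omega
      · rfl
  · apply le_of_eq
    apply Finset.sum_congr rfl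
    intro a _
    have h1 : ((a, 0) : ℕ × ℕ) ≠ (i, j) := by
      intro hco; injection hco with hc1 hc2; omega
    simp only [hTopple, h1, if_false]
    split_ifs with h2
    · exact absurd h2.1 (by omega)
    · rfl

/-- Column-0 mass does not increase under a horizontal toppling. -/
lemma kspm_col_hTopple (p i j : ℕ) (c : ℕ × ℕ → ℕ) (N : ℕ) :
    ∑ b ∈ Finset.range N, hTopple p i j c (0, b) ≤ ∑ b ∈ Finset.range N, c (0, b) := by
  apply Finset.sum_le_sum
  intro b _
  by_cases h : ((0, b) : ℕ × ℕ) = (i, j)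
  · rw [h]
    simp only [hTopple, if_pos rfl]
    exact Nat.sub_le _ _
  · simp only [hTopple, h, if_false]
    split_ifs with h2
    · exact absurd h2.2.1 (by omega)
    · exact le_refl _

/-- Column-0 mass does not increase under a vertical toppling. -/
lemma kspm_col_vTopple (p : ℕ) (hp : 2 ≤ p) (i j : ℕ) (c : ℕ × ℕ → ℕ)
    (hd : c (i, j + 1) + p ≤ c (i, j)) (N : ℕ) :
    ∑ b ∈ Finset.range N, vTopple p i j c (0, b) ≤ ∑ b ∈ Finset.range N, c (0, b) := by
  by_cases hi : i = 0
  · subst hi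
    by_cases hjN : j < N
    · have hmem : j ∈ Finset.range N := Finset.mem_range.mpr hjN
      have hsplit1 : (∑ b ∈ (Finset.range N).erase j, vTopple p 0 j c (0, b))
          + vTopple p 0 j c (0, j) = ∑ b ∈ Finset.range N, vTopple p 0 j c (0, b) :=
        Finset.sum_erase_add (Finset.range N) (fun b => vTopple p 0 j c (0, b)) hmem
      have hsplit2 : (∑ b ∈ (Finset.range N).erase j, c (0, b))
          + c (0, j) = ∑ b ∈ Finset.range N, c (0, b) :=
        Finset.sum_erase_add (Finset.range N) (fun b => c (0, b)) hmem
      have hterm : ∀ b ∈ (Finset.range N).erase j,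
          vTopple p 0 j c (0, b) = c (0, b) + (if j + 1 ≤ b ∧ b ≤ j + p - 1 then 1 else 0) := by
        intro b hb
        have hbj : b ≠ j := Finset.ne_of_mem_erase hb
        simp only [vTopple, Prod.mk.injEq, hbj, and_false, if_false, true_and]
        split_ifs <;> omega
      have herase : ∑ b ∈ (Finset.range N).erase j, vTopple p 0 j c (0, b)
          = (∑ b ∈ (Finset.range N).erase j, c (0, b))
            + ∑ b ∈ (Finset.range N).erase j, (if j + 1 ≤ b ∧ b ≤ j + p - 1 then 1 else 0) := by
        rw [Finset.sum_congr rfl hterm, Finset.sum_add_distrib]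
      have hcnt : (∑ b ∈ (Finset.range N).erase j,
          (if j + 1 ≤ b ∧ b ≤ j + p - 1 then 1 else 0)) ≤ p - 1 := by
        calc (∑ b ∈ (Finset.range N).erase j, (if j + 1 ≤ b ∧ b ≤ j + p - 1 then (1:ℕ) else 0))
            = (((Finset.range N).erase j).filter (fun b => j + 1 ≤ b ∧ b ≤ j + p - 1)).card := by
              simp [Finset.sum_boole]
          _ ≤ (Finset.Icc (j + 1) (j + p - 1)).card := by
              apply Finset.card_le_card
              intro b hb
              simp only [Finset.mem_filter] at hb
              exact Finset.mem_Icc.mpr hb.2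
          _ = p - 1 := by rw [Nat.card_Icc]; omega
      have htop : vTopple p 0 j c (0, j) = c (0, j) - (p - 1) := by
        simp [vTopple]
      omega
    · apply le_of_eq
      apply Finset.sum_congr rfl
      intro b hb
      have hbN : b < N := Finset.mem_range.mp hb
      have h1 : ((0, b) : ℕ × ℕ) ≠ (0, j) := by
        intro hco; injection hco with hc1 hc2; omega
      simp only [vTopple, h1, if_false]
      split_ifs with h2
      · omega
      · rfl
  · apply le_of_eq
    apply Finset.sum_congr rfl
    intro b _
    have h1 : ((0, b) : ℕ × ℕ) ≠ (i, j) := by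
      intro hco; injection hco with hc1 hc2; omega
    simp only [vTopple, h1, if_false]
    split_ifs with h2
    · exact absurd h2.1 (by omega)
    · rfl

/-- Row-0 mass does not increase under a vertical toppling. -/
lemma kspm_row_vTopple (p i j : ℕ) (c : ℕ × ℕ → ℕ) (N : ℕ) :
    ∑ a ∈ Finset.range N, vTopple p i j c (a, 0) ≤ ∑ a ∈ Finset.range N, c (a, 0) := by
  apply Finset.sum_le_sum
  intro a _
  by_cases h : ((a, 0) : ℕ × ℕ) = (i, j)
  · rw [h]
    simp only [vTopple, if_pos rfl]
    exact Nat.sub_le _ _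
  · simp only [vTopple, h, if_false]
    split_ifs with h2
    · exact absurd h2.2.1 (by omega)
    · exact le_refl _

/-- In the two-dimensional Kadanoff model with parameter `p ≥ 2`, let `x` be a
finite stable monotone configuration whose non-zero height differences all lie
at indices at most `n` along both axes, and let `Q` be the sum of all its
horizontal and vertical height differences. After one grain is added at the
origin, any site `(k, ℓ)` whose number of grains increases during any avalanche
(maximal sequence of allowed applications of the Kadanoff rule) satisfies
`‖(k, ℓ)‖ ≤ n + Q` for the Euclidean norm. -/
theorem kspm2d_avalanche_bound (p n : ℕ) (hp : 2 ≤ p) (x : ℕ × ℕ → ℕ)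
    (hfin : (Function.support x).Finite)
    (hmono : Monotone2 x)
    (hstab : ∀ i j : ℕ, x (i, j) < x (i + 1, j) + p ∧ x (i, j) < x (i, j + 1) + p)
    (hbound : ∀ i j : ℕ, n < i ∨ n < j →
      x (i + 1, j) = x (i, j) ∧ x (i, j + 1) = x (i, j))
    (Q : ℕ)
    (hQ : Q = ∑ i ∈ Finset.range (n + 1), ∑ j ∈ Finset.range (n + 1),
      ((x (i, j) - x (i + 1, j)) + (x (i, j) - x (i, j + 1))))
    (m : ℕ) (c : ℕ → ℕ × ℕ → ℕ)
    (hc0 : c 0 = fun s => if s = (0, 0) then x (0, 0) + 1 else x s)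
    (hstep : ∀ t : ℕ, t < m → ∃ i j : ℕ,
      (c t (i + 1, j) + p ≤ c t (i, j) ∧ c (t + 1) = hTopple p i j (c t) ∧
        Monotone2 (c (t + 1))) ∨
      (c t (i, j + 1) + p ≤ c t (i, j) ∧ c (t + 1) = vTopple p i j (c t) ∧
        Monotone2 (c (t + 1))))
    (hmax : ∀ i j : ℕ,
      ¬ (c m (i + 1, j) + p ≤ c m (i, j) ∧ Monotone2 (hTopple p i j (c m))) ∧
      ¬ (c m (i, j + 1) + p ≤ c m (i, j) ∧ Monotone2 (vTopple p i j (c m)))) :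
    ∀ k ℓ : ℕ, (∃ t : ℕ, t ≤ m ∧ c 0 (k, ℓ) < c t (k, ℓ)) →
      Real.sqrt ((k : ℝ) ^ 2 + (ℓ : ℝ) ^ 2) ≤ (n : ℝ) + (Q : ℝ) := by
  -- first, sites beyond `n` are empty
  have hzero : ∀ i j : ℕ, n < i ∨ n < j → x (i, j) = 0 := by
    intro i j hij
    by_contra hx
    rcases hij with hi | hj
    · have hconst : ∀ d : ℕ, x (i + d, j) = x (i, j) := by
        intro d
        induction d with
        | zero => rfl
        | succ d ih =>
          have h := (hbound (i + d) j (Or.inl (by omega))).1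
          rw [show i + (d + 1) = (i + d) + 1 from rfl, h, ih]
      refine (Set.infinite_of_injective_forall_mem
        (f := fun d : ℕ => ((i + d, j) : ℕ × ℕ)) ?_ ?_) hfin
      · intro a b hab
        injection hab with h1 h2
        omega
      · intro d
        rw [Function.mem_support, hconst d]
        exact hx
    · have hconst : ∀ d : ℕ, x (i, j + d) = x (i, j) := by
        intro d
        induction d with
        | zero => rfl
        | succ d ih =>
          have h := (hbound i (j + d) (Or.inr (by omega))).2
          rw [show j + (d + 1) = (j + d) + 1 from rfl, h, ih]
      refine (Set.infinite_of_injective_forall_mem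
        (f := fun d : ℕ => ((i, j + d) : ℕ × ℕ)) ?_ ?_) hfin
      · intro a b hab
        injection hab with h1 h2
        omega
      · intro d
        rw [Function.mem_support, hconst d]
        exact hx
  -- evaluate Q
  have hQ2 : (∑ b ∈ Finset.range (n + 1), x (0, b))
      + (∑ a ∈ Finset.range (n + 1), x (a, 0)) = Q := by
    rw [hQ]
    have hsplit : ∑ i ∈ Finset.range (n + 1), ∑ j ∈ Finset.range (n + 1),
        ((x (i, j) - x (i + 1, j)) + (x (i, j) - x (i, j + 1)))
        = (∑ i ∈ Finset.range (n + 1), ∑ j ∈ Finset.range (n + 1), (x (i, j) - x (i + 1, j)))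
          + ∑ i ∈ Finset.range (n + 1), ∑ j ∈ Finset.range (n + 1), (x (i, j) - x (i, j + 1)) := by
      rw [← Finset.sum_add_distrib]
      apply Finset.sum_congr rfl
      intro i _
      rw [← Finset.sum_add_distrib]
    rw [hsplit]
    have h1 : ∑ i ∈ Finset.range (n + 1), ∑ j ∈ Finset.range (n + 1), (x (i, j) - x (i + 1, j))
        = ∑ b ∈ Finset.range (n + 1), x (0, b) := by
      rw [Finset.sum_comm]
      apply Finset.sum_congr rfl
      intro b _
      have := kspm_tele (fun i => x (i, b)) (fun i => (hmono i b).1) (n + 1)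
      have hz : x (n + 1, b) = 0 := hzero (n + 1) b (Or.inl (by omega))
      omega
    have h2 : ∑ i ∈ Finset.range (n + 1), ∑ j ∈ Finset.range (n + 1), (x (i, j) - x (i, j + 1))
        = ∑ a ∈ Finset.range (n + 1), x (a, 0) := by
      apply Finset.sum_congr rfl
      intro a _
      have := kspm_tele (fun j => x (a, j)) (fun j => (hmono a j).2) (n + 1)
      have hz : x (a, n + 1) = 0 := hzero a (n + 1) (Or.inr (by omega))
      omega
    omega
  intro k ℓ ⟨t, htm, hlt⟩
  -- t ≥ 1
  obtain ⟨s, rfl⟩ : ∃ s, t = s + 1 := by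
    cases t with
    | zero => exact absurd hlt (lt_irrefl _)
    | succ s => exact ⟨s, rfl⟩
  have hmt : Monotone2 (c (s + 1)) := by
    obtain ⟨i, j, h⟩ := hstep s (by omega)
    rcases h with h | h <;> exact h.2.2
  have hpos : 1 ≤ c (s + 1) (k, ℓ) := by omega
  set N := k + ℓ + 1 with hN
  -- lower bounds on row-0 and column-0 mass at time s+1
  have hposr : ∀ a, a ≤ k → 1 ≤ c (s + 1) (a, 0) := by
    intro a ha
    have h1 : c (s + 1) (a + (k - a), ℓ) ≤ c (s + 1) (a, ℓ) := kspm_mono_left hmt a ℓ (k - a)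
    rw [show a + (k - a) = k by omega] at h1
    have h2 : c (s + 1) (a, 0 + ℓ) ≤ c (s + 1) (a, 0) := kspm_mono_right hmt a 0 ℓ
    rw [show 0 + ℓ = ℓ by omega] at h2
    omega
  have hposc : ∀ b, b ≤ ℓ → 1 ≤ c (s + 1) (0, b) := by
    intro b hb
    have h1 : c (s + 1) (k, b + (ℓ - b)) ≤ c (s + 1) (k, b) := kspm_mono_right hmt k b (ℓ - b)
    rw [show b + (ℓ - b) = ℓ by omega] at h1
    have h2 : c (s + 1) (0 + k, b) ≤ c (s + 1) (0, b) := kspm_mono_left hmt 0 b k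
    rw [show 0 + k = k by omega] at h2
    omega
  have hrow_lb : k + 1 ≤ ∑ a ∈ Finset.range N, c (s + 1) (a, 0) := by
    calc k + 1 = ∑ a ∈ Finset.range (k + 1), 1 := by simp
      _ ≤ ∑ a ∈ Finset.range (k + 1), c (s + 1) (a, 0) := by
          apply Finset.sum_le_sum
          intro a ha
          exact hposr a (by have := Finset.mem_range.mp ha; omega)
      _ ≤ ∑ a ∈ Finset.range N, c (s + 1) (a, 0) :=
          Finset.sum_le_sum_of_subset (Finset.range_subset_range.mpr (by omega))
  have hcol_lb : ℓ + 1 ≤ ∑ b ∈ Finset.range N, c (s + 1) (0, b) := by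
    calc ℓ + 1 = ∑ b ∈ Finset.range (ℓ + 1), 1 := by simp
      _ ≤ ∑ b ∈ Finset.range (ℓ + 1), c (s + 1) (0, b) := by
          apply Finset.sum_le_sum
          intro b hb
          exact hposc b (by have := Finset.mem_range.mp hb; omega)
      _ ≤ ∑ b ∈ Finset.range N, c (s + 1) (0, b) :=
          Finset.sum_le_sum_of_subset (Finset.range_subset_range.mpr (by omega))
  -- the monovariant
  have hW : ∀ u, u ≤ m →
      (∑ a ∈ Finset.range N, c u (a, 0)) + (∑ b ∈ Finset.range N, c u (0, b))
      ≤ (∑ a ∈ Finset.range N, c 0 (a, 0)) + (∑ b ∈ Finset.range N, c 0 (0, b)) := by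
    intro u
    induction u with
    | zero => intro _; exact le_refl _
    | succ u ih =>
      intro hu
      have h0 := ih (by omega)
      obtain ⟨i, j, h⟩ := hstep u (by omega)
      rcases h with ⟨hd, heq, _⟩ | ⟨hd, heq, _⟩
      · have hr := kspm_row_hTopple p hp i j (c u) hd N
        have hc := kspm_col_hTopple p i j (c u) N
        rw [heq]
        omega
      · have hr := kspm_row_vTopple p i j (c u) N
        have hc := kspm_col_vTopple p hp i j (c u) hd N
        rw [heq]
        omega
  -- value of the monovariant at time 0
  have hc0row : ∑ a ∈ Finset.range N, c 0 (a, 0) = (∑ a ∈ Finset.range N, x (a, 0)) + 1 := by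
    rw [hc0]
    have hcong : ∀ a ∈ Finset.range N,
        (if ((a, 0) : ℕ × ℕ) = (0, 0) then x (0, 0) + 1 else x (a, 0))
        = x (a, 0) + (if a = 0 then 1 else 0) := by
      intro a _
      by_cases h : a = 0
      · subst h; simp
      · have h1 : ((a, 0) : ℕ × ℕ) ≠ (0, 0) := by
          intro hco; injection hco with hc1 hc2; omega
        rw [if_neg h1, if_neg h, Nat.add_zero]
    rw [Finset.sum_congr rfl hcong, Finset.sum_add_distrib,
      Finset.sum_ite_eq' (Finset.range N) 0 (fun _ => 1)]
    have h0N : 0 ∈ Finset.range N := Finset.mem_range.mpr (by omega)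
    rw [if_pos h0N]
  have hc0col : ∑ b ∈ Finset.range N, c 0 (0, b) = (∑ b ∈ Finset.range N, x (0, b)) + 1 := by
    rw [hc0]
    have hcong : ∀ b ∈ Finset.range N,
        (if ((0, b) : ℕ × ℕ) = (0, 0) then x (0, 0) + 1 else x (0, b))
        = x (0, b) + (if b = 0 then 1 else 0) := by
      intro b _
      by_cases h : b = 0
      · subst h; simp
      · have h1 : ((0, b) : ℕ × ℕ) ≠ (0, 0) := by
          intro hco; injection hco with hc1 hc2; omega
        rw [if_neg h1, if_neg h, Nat.add_zero]
    rw [Finset.sum_congr rfl hcong, Finset.sum_add_distrib,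
      Finset.sum_ite_eq' (Finset.range N) 0 (fun _ => 1)]
    have h0N : 0 ∈ Finset.range N := Finset.mem_range.mpr (by omega)
    rw [if_pos h0N]
  -- compare initial sums with Q
  have hrowx : ∑ a ∈ Finset.range N, x (a, 0) ≤ ∑ a ∈ Finset.range (n + 1), x (a, 0) := by
    rcases le_or_gt N (n + 1) with h | h
    · exact Finset.sum_le_sum_of_subset (Finset.range_subset_range.mpr h)
    · apply le_of_eq
      refine (Finset.sum_subset (Finset.range_subset_range.mpr (le_of_lt h)) ?_).symm
      intro a _ hna
      refine hzero a 0 (Or.inl ?_)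
      have : ¬ a < n + 1 := fun hcon => hna (Finset.mem_range.mpr hcon)
      omega
  have hcolx : ∑ b ∈ Finset.range N, x (0, b) ≤ ∑ b ∈ Finset.range (n + 1), x (0, b) := by
    rcases le_or_gt N (n + 1) with h | h
    · exact Finset.sum_le_sum_of_subset (Finset.range_subset_range.mpr h)
    · apply le_of_eq
      refine (Finset.sum_subset (Finset.range_subset_range.mpr (le_of_lt h)) ?_).symm
      intro b _ hnb
      refine hzero 0 b (Or.inr ?_)
      have : ¬ b < n + 1 := fun hcon => hnb (Finset.mem_range.mpr hcon)
      omega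
  -- conclude k + ℓ ≤ Q
  have hklQ : k + ℓ ≤ Q := by
    have h1 := hW (s + 1) htm
    omega
  -- the real-number estimate
  have h0k : (0 : ℝ) ≤ (k : ℝ) := Nat.cast_nonneg k
  have h0l : (0 : ℝ) ≤ (ℓ : ℝ) := Nat.cast_nonneg ℓ
  have hsq : (k : ℝ) ^ 2 + (ℓ : ℝ) ^ 2 ≤ ((k : ℝ) + (ℓ : ℝ)) ^ 2 := by nlinarith
  calc Real.sqrt ((k : ℝ) ^ 2 + (ℓ : ℝ) ^ 2)
      ≤ Real.sqrt (((k : ℝ) + (ℓ : ℝ)) ^ 2) := Real.sqrt_le_sqrt hsq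
    _ = (k : ℝ) + (ℓ : ℝ) := Real.sqrt_sq (by linarith)
    _ ≤ (n : ℝ) + (Q : ℝ) := by
        have : (k : ℝ) + (ℓ : ℝ) ≤ (Q : ℝ) := by exact_mod_cast hklQ
        have hn : (0 : ℝ) ≤ (n : ℝ) := Nat.cast_nonneg n
        linarith
end
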